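/- arXiv:math/0303319 — 5 statements merged into one kernel-verified Lean document; each statement's English description precedes it below -/
import Mathlib

section
/- MacMahon's Master Theorem: Let A = (a_{ij}) be an r×r matrix with entries in a commutative ring, and let x_1,...,x_r be commuting indeterminates. For 1 ≤ i ≤ r set X_i = Σ_j a_{ij} x_j. For a vector (m_1,...,m_r) of non-negative integers, let G(m_1,...,m_r) be the coefficient of x_1^{m_1}···x_r^{m_r} in Π_i X_i^{m_i}. Then the sum Σ_{m_1,...,m_r ≥ 0} G(m_1,...,m_r) equals 1/det(I − A) as formal power series. -/
/-!
The `n`-th coefficient of the series is the trace of the `n`-th symmetric power of `A`: the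
matrix, in the monomial basis, of the substitution `x ↦ A x` acting on homogeneous polynomials of
degree `n`. This matrix reverses products in `A` and `tr (S T) = tr (T S)`, so the series is
invariant under conjugation of `A`, as is `det (1 - t A)`.

Over an algebraically closed field, conjugate `A` so that an eigenvector becomes the first basis
vector; its first column is then `(a, 0, …, 0)`. Since `x₀` then occurs only in `X₀`, whose
`x₀`-coefficient is `a`, the series factors as `∑ aᵏ tᵏ` times the series of the lower-right
block `B`, while `det (1 - t A) = (1 - a t) det (1 - t B)`; induction on `r` concludes. Both sides are
compatible with base change, so the general case follows from the generic matrix over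
`ℤ[a_ij]`, which embeds into the algebraic closure of its fraction field.
-/

open MvPolynomial Finset

lemma Finset.Nat.sum_antidiagonalTuple_succ {M : Type*} [AddCommMonoid M] (k n : ℕ)
    (f : (Fin (k + 1) → ℕ) → M) :
    ∑ m ∈ Nat.antidiagonalTuple (k + 1) n, f m =
      ∑ p ∈ antidiagonal n, ∑ m ∈ Nat.antidiagonalTuple k p.2, f (Fin.cons p.1 m) := by
  rw [Finset.sum_sigma']
  refine Finset.sum_bij' (fun m _ => ⟨(m 0, n - m 0), Fin.tail m⟩)
    (fun x _ => Fin.cons x.1.1 x.2) ?_ ?_ ?_ ?_ ?_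
  · intro m hm
    rw [Nat.mem_antidiagonalTuple, Fin.sum_univ_succ] at hm
    simp [Nat.mem_antidiagonalTuple, Fin.tail, ← hm]
  · rintro ⟨⟨a, b⟩, m⟩ hx
    simp only [Finset.mem_sigma, HasAntidiagonal.mem_antidiagonal,
      Nat.mem_antidiagonalTuple] at hx
    simp [Nat.mem_antidiagonalTuple, Fin.sum_univ_succ, hx.2, hx.1]
  · intro m _
    simp
  · rintro ⟨⟨a, b⟩, m⟩ hx
    simp only [Finset.mem_sigma, HasAntidiagonal.mem_antidiagonal] at hx
    simp [← hx.1]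
  · intro m _
    simp

lemma PowerSeries.mk_pow_mul_one_sub_X_mul_C {R : Type*} [CommRing R] (a : R) :
    PowerSeries.mk (a ^ ·) * (1 - PowerSeries.X * PowerSeries.C a) = 1 := by
  simpa [PowerSeries.rescale_mk, mul_comm PowerSeries.X] using
    congrArg (PowerSeries.rescale a) (PowerSeries.mk_one_mul_one_sub_eq_one R)

open Matrix in
lemma Matrix.exists_conj_col_zero {K : Type*} [Field K] [IsAlgClosed K] {r : ℕ}
    (A : Matrix (Fin (r + 1)) (Fin (r + 1)) K) :
    ∃ P Q : Matrix (Fin (r + 1)) (Fin (r + 1)) K,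
      P * Q = 1 ∧ Q * P = 1 ∧ ∀ i : Fin r, (Q * A * P) i.succ 0 = 0 := by
  obtain ⟨μ, hμ⟩ := Module.End.exists_eigenvalue (Matrix.toLin' A)
  obtain ⟨v, hv⟩ := hμ.exists_hasEigenvector
  have he : (Pi.single 0 1 : Fin (r + 1) → K) ≠ 0 := by simp
  -- `SL` acts transitively on lines, so some `P` sends the first basis vector into the line of `v`.
  obtain ⟨g, hg⟩ := MulAction.exists_smul_eq (SpecialLinearGroup (Fin (r + 1)) K)
    (Projectivization.mk K _ he) (Projectivization.mk K v hv.2)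
  rw [Projectivization.smul_mk, Projectivization.mk_eq_mk_iff] at hg
  obtain ⟨a, ha⟩ := hg
  obtain ⟨P, Q, hPQ, hQP, hPe⟩ : ∃ P Q : Matrix (Fin (r + 1)) (Fin (r + 1)) K,
      P * Q = 1 ∧ Q * P = 1 ∧ P *ᵥ Pi.single 0 1 = a • v :=
    ⟨g, ↑g⁻¹, by rw [← SpecialLinearGroup.coe_mul, mul_inv_cancel, SpecialLinearGroup.coe_one],
      by rw [← SpecialLinearGroup.coe_mul, inv_mul_cancel, SpecialLinearGroup.coe_one], ha.symm⟩
  have hAv : A *ᵥ v = μ • v := by rw [← toLin'_apply, hv.apply_eq_smul]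
  refine ⟨P, Q, hPQ, hQP, fun i => ?_⟩
  have hcol : (Q * A * P) *ᵥ Pi.single 0 1 = μ • Pi.single (0 : Fin (r + 1)) (1 : K) := by
    rw [← mulVec_mulVec, hPe, ← mulVec_mulVec, mulVec_smul, hAv, smul_comm, mulVec_smul,
      ← hPe, mulVec_mulVec, hQP, one_mulVec]
  simpa using congrFun hcol i.succ

namespace MacMahon

variable {R : Type*} [CommRing R]

section LinearSubst

variable {ι : Type*} [Fintype ι]

noncomputable def linearForm (A : Matrix ι ι R) (i : ι) : MvPolynomial ι R :=
  ∑ j, C (A i j) * X j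

noncomputable def linearSubst (A : Matrix ι ι R) : MvPolynomial ι R →ₐ[R] MvPolynomial ι R :=
  aeval (linearForm A)

lemma linearSubst_mul (A B : Matrix ι ι R) :
    linearSubst (A * B) = (linearSubst B).comp (linearSubst A) := by
  refine algHom_ext fun i => ?_
  simp only [linearSubst, linearForm, AlgHom.comp_apply, aeval_X, map_sum, map_mul, aeval_C,
    algebraMap_eq, Matrix.mul_apply, Finset.sum_mul, Finset.mul_sum, mul_assoc]
  exact Finset.sum_comm

lemma linearSubst_monomial_one (A : Matrix ι ι R) (d : ι →₀ ℕ) :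
    linearSubst A (monomial d 1) = ∏ i, linearForm A i ^ d i := by
  rw [linearSubst, aeval_monomial, map_one, one_mul, Finsupp.prod_fintype _ _ fun _ => pow_zero _]

lemma isHomogeneous_linearForm (A : Matrix ι ι R) (i : ι) : (linearForm A i).IsHomogeneous 1 :=
  IsHomogeneous.sum _ _ _ fun j _ => isHomogeneous_C_mul_X (A i j) j

lemma isHomogeneous_linearSubst (A : Matrix ι ι R) {p : MvPolynomial ι R} {n : ℕ}
    (hp : p.IsHomogeneous n) : (linearSubst A p).IsHomogeneous n := by
  have h := hp.aeval (linearForm A) (isHomogeneous_linearForm A)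
  rwa [one_mul] at h

noncomputable def symPowEnd (A : Matrix ι ι R) (n : ℕ) :
    Module.End R (homogeneousSubmodule ι R n) :=
  (linearSubst A).toLinearMap.restrict fun _ => isHomogeneous_linearSubst A

lemma coe_symPowEnd_apply (A : Matrix ι ι R) {n : ℕ} (p : homogeneousSubmodule ι R n) :
    (symPowEnd A n p : MvPolynomial ι R) = linearSubst A p :=
  rfl

lemma symPowEnd_mul (A B : Matrix ι ι R) (n : ℕ) :
    symPowEnd (A * B) n = symPowEnd B n ∘ₗ symPowEnd A n :=
  LinearMap.ext fun p => Subtype.ext <| by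
    simp only [coe_symPowEnd_apply, LinearMap.comp_apply, linearSubst_mul, AlgHom.comp_apply]

end LinearSubst

section SymPowMatrix

variable {r : ℕ}

noncomputable def monomialsOfDegree (r n : ℕ) : Finset (Fin r →₀ ℕ) :=
  (Nat.antidiagonalTuple r n).map Finsupp.equivFunOnFinite.symm.toEmbedding

lemma mem_monomialsOfDegree {n : ℕ} {d : Fin r →₀ ℕ} :
    d ∈ monomialsOfDegree r n ↔ d.degree = n := by
  simp [monomialsOfDegree, Nat.mem_antidiagonalTuple, Finsupp.degree_eq_sum]

lemma restrictSupport_monomialsOfDegree (n : ℕ) :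
    restrictSupport R ↑(monomialsOfDegree r n) = homogeneousSubmodule (Fin r) R n := by
  rw [homogeneousSubmodule_eq_finsupp_supported]
  congr
  ext d
  exact mem_monomialsOfDegree

variable (R r) in
noncomputable def homogeneousBasis (n : ℕ) :
    Module.Basis (monomialsOfDegree r n) R (homogeneousSubmodule (Fin r) R n) :=
  (basisRestrictSupport R _).map (LinearEquiv.ofEq _ _ (restrictSupport_monomialsOfDegree n))

lemma homogeneousBasis_repr_apply (n : ℕ) (p : homogeneousSubmodule (Fin r) R n) (d) :
    (homogeneousBasis R r n).repr p d = coeff d p.1 :=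
  rfl

lemma homogeneousBasis_apply (n : ℕ) (d) :
    (homogeneousBasis R r n d : MvPolynomial (Fin r) R) = monomial d 1 := by
  have hd : monomial (d : Fin r →₀ ℕ) (1 : R) ∈ homogeneousSubmodule (Fin r) R n :=
    isHomogeneous_monomial _ (mem_monomialsOfDegree.mp d.2)
  suffices homogeneousBasis R r n d = ⟨_, hd⟩ from congrArg Subtype.val this
  rw [Module.Basis.apply_eq_iff]
  ext e
  rw [homogeneousBasis_repr_apply, coeff_monomial, Finsupp.single_apply]
  exact if_congr Subtype.ext_iff.symm rfl rfl

noncomputable def symPowMatrix (A : Matrix (Fin r) (Fin r) R) (n : ℕ) :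
    Matrix (monomialsOfDegree r n) (monomialsOfDegree r n) R :=
  LinearMap.toMatrix (homogeneousBasis R r n) (homogeneousBasis R r n) (symPowEnd A n)

lemma symPowMatrix_mul (A B : Matrix (Fin r) (Fin r) R) (n : ℕ) :
    symPowMatrix (A * B) n = symPowMatrix B n * symPowMatrix A n := by
  rw [symPowMatrix, symPowEnd_mul, LinearMap.toMatrix_comp _ (homogeneousBasis R r n)]
  rfl

lemma trace_symPowMatrix (A : Matrix (Fin r) (Fin r) R) (n : ℕ) :
    (symPowMatrix A n).trace = ∑ m ∈ Nat.antidiagonalTuple r n,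
      coeff (Finsupp.equivFunOnFinite.symm m) (∏ i, linearForm A i ^ m i) := by
  simp only [Matrix.trace, Matrix.diag, symPowMatrix, LinearMap.toMatrix_apply,
    homogeneousBasis_repr_apply, coe_symPowEnd_apply, homogeneousBasis_apply,
    linearSubst_monomial_one]
  rw [Finset.sum_coe_sort (monomialsOfDegree r n) fun d => coeff d (∏ i, linearForm A i ^ d i),
    monomialsOfDegree, Finset.sum_map]
  rfl

end SymPowMatrix

section Series

variable {r : ℕ}

noncomputable def macMahonSeries (A : Matrix (Fin r) (Fin r) R) : PowerSeries R :=
  PowerSeries.mk fun n => ∑ m ∈ Nat.antidiagonalTuple r n,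
    coeff (Finsupp.equivFunOnFinite.symm m) (∏ i, linearForm A i ^ m i)

lemma coeff_macMahonSeries (A : Matrix (Fin r) (Fin r) R) (n : ℕ) :
    PowerSeries.coeff n (macMahonSeries A) = (symPowMatrix A n).trace := by
  rw [macMahonSeries, PowerSeries.coeff_mk, trace_symPowMatrix]

lemma macMahonSeries_mul_comm (A B : Matrix (Fin r) (Fin r) R) :
    macMahonSeries (A * B) = macMahonSeries (B * A) := by
  ext n
  rw [coeff_macMahonSeries, coeff_macMahonSeries, symPowMatrix_mul, symPowMatrix_mul,
    Matrix.trace_mul_comm]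

lemma macMahonSeries_conj {P Q : Matrix (Fin r) (Fin r) R} (hQP : Q * P = 1)
    (A : Matrix (Fin r) (Fin r) R) : macMahonSeries (P * A * Q) = macMahonSeries A := by
  rw [macMahonSeries_mul_comm, ← mul_assoc, hQP, one_mul]

lemma map_macMahonSeries {S : Type*} [CommRing S] (f : R →+* S) (A : Matrix (Fin r) (Fin r) R) :
    PowerSeries.map f (macMahonSeries A) = macMahonSeries (A.map f) := by
  ext n
  simp [macMahonSeries, linearForm, ← coeff_map]

lemma finSuccEquiv_linearForm (A : Matrix (Fin (r + 1)) (Fin (r + 1)) R) (i : Fin (r + 1)) :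
    finSuccEquiv R r (linearForm A i) =
      Polynomial.C (C (A i 0)) * Polynomial.X + Polynomial.C (∑ j, C (A i j.succ) * X j) := by
  have hC (a : R) : finSuccEquiv R r (C a) = Polynomial.C (C a) := (finSuccEquiv R r).commutes a
  simp [linearForm, Fin.sum_univ_succ, finSuccEquiv_X_zero, finSuccEquiv_X_succ, hC]

lemma coeff_prod_linearForm_of_col_zero (A : Matrix (Fin (r + 1)) (Fin (r + 1)) R)
    (hA : ∀ i : Fin r, A i.succ 0 = 0) (m : Fin (r + 1) → ℕ) :
    coeff (Finsupp.equivFunOnFinite.symm m) (∏ i, linearForm A i ^ m i) =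
      A 0 0 ^ m 0 * coeff (Finsupp.equivFunOnFinite.symm (Fin.tail m))
        (∏ i, linearForm (A.submatrix Fin.succ Fin.succ) i ^ Fin.tail m i) := by
  set L : Polynomial (MvPolynomial (Fin r) R) :=
    Polynomial.C (C (A 0 0)) * Polynomial.X + Polynomial.C (∑ j, C (A 0 j.succ) * X j)
  have hm : Finsupp.equivFunOnFinite.symm m =
      Finsupp.cons (m 0) (Finsupp.equivFunOnFinite.symm (Fin.tail m)) := by
    ext i
    cases i using Fin.cases <;> simp [Fin.tail]
  have hrow (i : Fin r) : finSuccEquiv R r (linearForm A i.succ) =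
      Polynomial.C (linearForm (A.submatrix Fin.succ Fin.succ) i) := by
    rw [finSuccEquiv_linearForm, hA, C_0, Polynomial.C_0, zero_mul, zero_add]
    rfl
  have hF : finSuccEquiv R r (∏ i, linearForm A i ^ m i) =
      L ^ m 0 * Polynomial.C (∏ i, linearForm (A.submatrix Fin.succ Fin.succ) i ^ Fin.tail m i) := by
    rw [Fin.prod_univ_succ, map_mul, map_pow, finSuccEquiv_linearForm, map_prod, map_prod]
    refine congrArg _ (Finset.prod_congr rfl fun i _ => ?_)
    rw [map_pow, hrow, map_pow]
    rfl
  have hL : (L ^ m 0).coeff (m 0) = C (A 0 0) ^ m 0 := by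
    have h := Polynomial.coeff_pow_of_natDegree_le (p := L) (m := m 0) (n := 1)
      Polynomial.natDegree_linear_le
    rw [mul_one] at h
    rw [h]
    simp [L]
  rw [hm, ← finSuccEquiv_coeff_coeff, hF, Polynomial.coeff_mul_C, hL, ← C_pow, coeff_C_mul]

lemma macMahonSeries_of_col_zero (A : Matrix (Fin (r + 1)) (Fin (r + 1)) R)
    (hA : ∀ i : Fin r, A i.succ 0 = 0) :
    macMahonSeries A =
      PowerSeries.mk (A 0 0 ^ ·) * macMahonSeries (A.submatrix Fin.succ Fin.succ) := by
  ext n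
  rw [PowerSeries.coeff_mul, macMahonSeries, PowerSeries.coeff_mk, Nat.sum_antidiagonalTuple_succ]
  refine Finset.sum_congr rfl fun p _ => ?_
  simp only [coeff_prod_linearForm_of_col_zero A hA, Fin.cons_zero, Fin.tail_cons, macMahonSeries,
    PowerSeries.coeff_mk, Finset.mul_sum]

end Series

section Determinant

variable {ι : Type*} [Fintype ι] [DecidableEq ι]

noncomputable def detOneSubX (A : Matrix ι ι R) : PowerSeries R :=
  (1 - (PowerSeries.X : PowerSeries R) • A.map PowerSeries.C).det

lemma detOneSubX_conj {P Q : Matrix ι ι R} (hPQ : P * Q = 1) (hQP : Q * P = 1)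
    (A : Matrix ι ι R) : detOneSubX (P * A * Q) = detOneSubX A := by
  have h1 : P.map PowerSeries.C * Q.map PowerSeries.C = 1 := by
    rw [← Matrix.map_mul, hPQ, Matrix.map_one _ (map_zero _) (map_one _)]
  have h2 : Q.map PowerSeries.C * P.map PowerSeries.C = 1 := by
    rw [← Matrix.map_mul, hQP, Matrix.map_one _ (map_zero _) (map_one _)]
  rw [detOneSubX, detOneSubX, ← Matrix.det_conj_of_mul_eq_one h1 h2
    (N := 1 - (PowerSeries.X : PowerSeries R) • A.map PowerSeries.C), Matrix.mul_sub,
    Matrix.sub_mul, Matrix.mul_one, h1, Matrix.mul_smul, Matrix.smul_mul, Matrix.map_mul,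
    Matrix.map_mul]

lemma map_detOneSubX {S : Type*} [CommRing S] (f : R →+* S) (A : Matrix ι ι R) :
    PowerSeries.map f (detOneSubX A) = detOneSubX (A.map f) := by
  rw [detOneSubX, RingHom.map_det, detOneSubX]
  congr 1
  ext i j
  by_cases h : i = j <;> simp [h]

lemma detOneSubX_of_col_zero {r : ℕ} (A : Matrix (Fin (r + 1)) (Fin (r + 1)) R)
    (hA : ∀ i : Fin r, A i.succ 0 = 0) :
    detOneSubX A = (1 - PowerSeries.X * PowerSeries.C (A 0 0)) *
      detOneSubX (A.submatrix Fin.succ Fin.succ) := by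
  rw [detOneSubX, Matrix.det_succ_column_zero, Fin.sum_univ_succ, Finset.sum_eq_zero, add_zero]
  · simp only [Fin.succAbove_zero, pow_zero, one_mul, Fin.val_zero, detOneSubX]
    congr 2
    ext i j
    by_cases h : i = j <;> simp [h]
  · intro i _
    simp [hA]

end Determinant

theorem macMahonSeries_mul_detOneSubX_of_isAlgClosed {K : Type*} [Field K] [IsAlgClosed K]
    {r : ℕ} (A : Matrix (Fin r) (Fin r) K) : macMahonSeries A * detOneSubX A = 1 := by
  induction r with
  | zero =>
    ext n
    cases n <;> simp [macMahonSeries, detOneSubX, Nat.antidiagonalTuple_zero_right,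
      Subsingleton.elim _ (0 : Fin 0 →₀ ℕ)]
  | succ r ih =>
    obtain ⟨P, Q, hPQ, hQP, hcol⟩ := Matrix.exists_conj_col_zero A
    set B := Q * A * P
    rw [← macMahonSeries_conj hPQ A, ← detOneSubX_conj hQP hPQ A, macMahonSeries_of_col_zero B hcol,
      detOneSubX_of_col_zero B hcol, mul_mul_mul_comm, PowerSeries.mk_pow_mul_one_sub_X_mul_C,
      ih, one_mul]

theorem macMahonSeries_mul_detOneSubX {r : ℕ} (A : Matrix (Fin r) (Fin r) R) :
    macMahonSeries A * detOneSubX A = 1 := by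
  let S := MvPolynomial (Fin r × Fin r) ℤ
  let K := AlgebraicClosure (FractionRing S)
  have hinj : Function.Injective ((algebraMap (FractionRing S) K).comp (algebraMap S _)) :=
    (algebraMap (FractionRing S) K).injective.comp (IsFractionRing.injective S (FractionRing S))
  have hgeneric : macMahonSeries (Matrix.mvPolynomialX (Fin r) (Fin r) ℤ) *
      detOneSubX (Matrix.mvPolynomialX (Fin r) (Fin r) ℤ) = 1 := by
    apply PowerSeries.map_injective _ hinj
    rw [map_mul, map_macMahonSeries, map_detOneSubX, map_one]
    exact macMahonSeries_mul_detOneSubX_of_isAlgClosed _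
  have := congrArg (PowerSeries.map (eval₂Hom (Int.castRingHom R) fun p => A p.1 p.2)) hgeneric
  rwa [map_mul, map_macMahonSeries, map_detOneSubX, map_one, coe_eval₂Hom,
    Matrix.mvPolynomialX_map_eval₂] at this

end MacMahon

/-- **MacMahon's Master Theorem.** For an `r × r` matrix `A` over a commutative ring,
with `X i = Σ_j A i j * x j` and `G m` the coefficient of `x^m` in `Π_i (X i)^(m i)`,
the generating function `Σ_m G m` (organized by total degree, with a formal variable
`t` recording the degree) is the inverse of `det (I - t A)` in `R⟦t⟧`. -/
theorem macmahon_master_theorem {R : Type*} [CommRing R] {r : ℕ}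
    (A : Matrix (Fin r) (Fin r) R) (G : (Fin r → ℕ) → R)
    (hG : ∀ m : Fin r → ℕ,
      G m = MvPolynomial.coeff (Finsupp.equivFunOnFinite.symm m)
        (∏ i, (∑ j, MvPolynomial.C (A i j) * MvPolynomial.X j) ^ m i)) :
    (PowerSeries.mk fun n => ∑ m ∈ Finset.Nat.antidiagonalTuple r n, G m) *
      Matrix.det (1 - (PowerSeries.X : PowerSeries R) • A.map (PowerSeries.C (R := R))) = 1 := by
  have hseries : (PowerSeries.mk fun n => ∑ m ∈ Finset.Nat.antidiagonalTuple r n, G m) =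
      MacMahon.macMahonSeries A := by
    simp only [MacMahon.macMahonSeries, MacMahon.linearForm, hG]
  rw [hseries]
  exact MacMahon.macMahonSeries_mul_detOneSubX A
end

section
/- For an r×r matrix A with commuting entries, tr S^n(A) = Σ_{m_1+···+m_r = n} G(m_1,...,m_r), where G(m_1,...,m_r) is the coefficient of x_1^{m_1}···x_r^{m_r} in Π_i (Σ_j a_{ij} x_j)^{m_i}. -/
/-!
The monomials `x^m` with `|m| = n` form a basis of the degree-`n` part, so the trace of `S^n(A)`
is the sum of its diagonal entries: the coefficient of `x^m` in the image of `x^m`, which is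
`∏ i, (∑ j, a i j * x j) ^ m i`.
-/

open MvPolynomial

theorem LinearMap.trace_eq_sum_repr_apply {R M ι : Type*} [CommRing R] [AddCommGroup M]
    [Module R M] [Fintype ι] (b : Module.Basis ι R M) (f : M →ₗ[R] M) :
    LinearMap.trace R M f = ∑ i, b.repr (f (b i)) i := by
  classical
  simp only [LinearMap.trace_eq_matrix_trace R b f, Matrix.trace, Matrix.diag,
    LinearMap.toMatrix_apply]

namespace MvPolynomial

section homogeneousBasis

variable (σ R : Type*) [CommSemiring R] (n : ℕ)

noncomputable def homogeneousBasis :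
    Module.Basis {d : σ →₀ ℕ // d.degree = n} R (homogeneousSubmodule σ R n) :=
  (basisRestrictSupport R {d | d.degree = n}).map
    (LinearEquiv.ofEq _ _ (homogeneousSubmodule_eq_finsupp_supported σ R n).symm)

variable {σ R n}

theorem homogeneousBasis_repr_apply (p : homogeneousSubmodule σ R n)
    (d : {d : σ →₀ ℕ // d.degree = n}) :
    (homogeneousBasis σ R n).repr p d = coeff d.1 (p : MvPolynomial σ R) := rfl

theorem coe_homogeneousBasis_apply (d : {d : σ →₀ ℕ // d.degree = n}) :
    (homogeneousBasis σ R n d : MvPolynomial σ R) = monomial d.1 1 := by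
  classical
  have hmem : monomial d.1 (1 : R) ∈ homogeneousSubmodule σ R n := isHomogeneous_monomial _ d.2
  rw [show homogeneousBasis σ R n d = ⟨_, hmem⟩ from Module.Basis.apply_eq_iff.2 ?_]
  ext e
  simp only [homogeneousBasis_repr_apply, coeff_monomial, Finsupp.single_apply, Subtype.ext_iff]

end homogeneousBasis

noncomputable def degreeEqEquivAntidiagonalTuple (r n : ℕ) :
    {d : Fin r →₀ ℕ // d.degree = n} ≃ Finset.Nat.antidiagonalTuple r n :=
  Finsupp.equivFunOnFinite.subtypeEquiv fun d => by
    simp [Finset.Nat.mem_antidiagonalTuple, Finsupp.degree_eq_sum]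

end MvPolynomial

/-- For an `r × r` matrix `A` over a commutative ring, the trace of the induced map
`S^n(A)` on the `n`-th symmetric power of `R^r` (realized as the degree-`n` homogeneous
component of the polynomial ring, on which `A` acts by the substitution
`x i ↦ Σ_j A i j * x j`) equals `Σ_{m₁+⋯+m_r = n} G(m₁,…,m_r)`, where `G m` is the
coefficient of `x^m` in `Π_i (Σ_j A i j * x j)^(m i)`. -/
theorem trace_symmetricPower_eq_sum_G {R : Type*} [CommRing R] {r n : ℕ}
    (A : Matrix (Fin r) (Fin r) R)
    (f : MvPolynomial.homogeneousSubmodule (Fin r) R n →ₗ[R]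
        MvPolynomial.homogeneousSubmodule (Fin r) R n)
    (hf : ∀ p : MvPolynomial.homogeneousSubmodule (Fin r) R n,
      (f p : MvPolynomial (Fin r) R) =
        MvPolynomial.aeval (fun i => ∑ j, MvPolynomial.C (A i j) * MvPolynomial.X j)
          (p : MvPolynomial (Fin r) R)) :
    LinearMap.trace R _ f =
      ∑ m ∈ Finset.Nat.antidiagonalTuple r n,
        MvPolynomial.coeff (Finsupp.equivFunOnFinite.symm m)
          (∏ i, (∑ j, MvPolynomial.C (A i j) * MvPolynomial.X j) ^ m i) := by
  let b := (homogeneousBasis (Fin r) R n).reindex (degreeEqEquivAntidiagonalTuple r n)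
  rw [LinearMap.trace_eq_sum_repr_apply b,
    ← Finset.sum_coe_sort (Finset.Nat.antidiagonalTuple r n)]
  refine Finset.sum_congr rfl fun m _ => ?_
  rw [Module.Basis.repr_reindex_apply, homogeneousBasis_repr_apply, Module.Basis.reindex_apply,
    hf, coe_homogeneousBasis_apply, aeval_monomial, map_one, one_mul, Finsupp.prod_pow]
  rfl
end

section
/- Commutation of the quantum linear forms: Let A = (a_{ij}) be a right-quantum matrix whose entries commute with quantum variables x_1,...,x_r satisfying x_j x_i = q x_i x_j for i < j. Set X_i = Σ_j a_{ij} x_j. Then for 1 ≤ i < j ≤ r, X_j X_i = q X_i X_j. -/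
/-- Number of inversions of a permutation of `Fin r`. -/
def invCount {r : ℕ} (π : Equiv.Perm (Fin r)) : ℕ :=
  (Finset.univ.filter fun p : Fin r × Fin r => p.1 < p.2 ∧ π p.2 < π p.1).card

/-- The quantum determinant of a square matrix over a possibly noncommutative ring:
`det_q(B) = Σ_π (-q)^{-inv(π)} B_{π(1)1} ⋯ B_{π(r)r}` (ordered product). -/
noncomputable def detq {R : Type*} [Ring R] {r : ℕ} (q : Rˣ)
    (B : Matrix (Fin r) (Fin r) R) : R :=
  ∑ π : Equiv.Perm (Fin r),
    (((-q) ^ (-(invCount π : ℤ)) : Rˣ) : R) * (List.ofFn fun i => B (π i) i).prod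

/-- `A` is right-quantum: the entries in each column `q`-commute
(`ca = q·ac`, `db = q·bd`) and every `2 × 2` submatrix `(a b; c d)` satisfies the
cross commutation relation `ad = da + q⁻¹·cb − q·bc`. -/
def RightQuantum {R : Type*} [Ring R] {r : ℕ} (q : Rˣ)
    (A : Matrix (Fin r) (Fin r) R) : Prop :=
  (∀ j i i' : Fin r, i < i' → A i' j * A i j = (q : R) * (A i j * A i' j)) ∧
  (∀ i i' j j' : Fin r, i < i' → j < j' →
    A i j * A i' j' =
      A i' j' * A i j + ((q⁻¹ : Rˣ) : R) * (A i' j * A i j') - (q : R) * (A i j' * A i' j))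

/-! Expanding, `X j * X i - q * (X i * X j) = ∑ k, ∑ l, c k l * (x k * x l)` with
`c k l = a j k * a i l - q * (a i k * a j l)`. The column relation gives `c k k = 0`, and for
`k < l` the cross relation is exactly `c k l + q * c l k = 0`; since `x l * x k = q * (x k * x l)`,
this makes the `(k, l)` and `(l, k)` terms cancel. -/

open Finset

theorem Finset.sum_sum_eq_zero_of_add_swap {ι M : Type*} [Fintype ι] [LinearOrder ι]
    [AddCommMonoid M] (F : ι → ι → M) (hdiag : ∀ k, F k k = 0)
    (hswap : ∀ k l, k < l → F k l + F l k = 0) :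
    ∑ k, ∑ l, F k l = 0 := by
  rw [← Fintype.sum_prod_type']
  refine sum_ninvolution Prod.swap ?_ ?_ (fun _ => mem_univ _) (fun _ => rfl)
  · rintro ⟨k, l⟩
    rcases lt_trichotomy k l with h | rfl | h
    · exact hswap k l h
    · simp only [Prod.swap_prod_mk, hdiag, add_zero]
    · exact (add_comm _ _).trans (hswap l k h)
  · rintro ⟨k, l⟩ hne hfix
    obtain rfl : l = k := (Prod.mk.inj hfix).1
    exact hne (hdiag _)

section Ring

variable {R : Type*} [Ring R]

theorem sum_mul_sum_of_commute {ι : Type*} [Fintype ι] (a b x : ι → R)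
    (hxb : ∀ k l, Commute (x k) (b l)) :
    (∑ k, a k * x k) * (∑ l, b l * x l) = ∑ k, ∑ l, a k * b l * (x k * x l) := by
  rw [sum_mul_sum]
  refine sum_congr rfl fun k _ => sum_congr rfl fun l _ => ?_
  rw [mul_assoc, mul_assoc, ← mul_assoc (x k), (hxb k l).eq, mul_assoc]

theorem sum_sum_mul_eq_zero_of_qcomm {ι : Type*} [Fintype ι] [LinearOrder ι] (q : R)
    (y : ι → R) (hy : ∀ k l, k < l → y l * y k = q * (y k * y l))
    (c : ι → ι → R) (hqc : ∀ k l, Commute q (c k l)) (hdiag : ∀ k, c k k = 0)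
    (hanti : ∀ k l, k < l → c k l + q * c l k = 0) :
    ∑ k, ∑ l, c k l * (y k * y l) = 0 := by
  refine sum_sum_eq_zero_of_add_swap _ (fun k => by rw [hdiag, zero_mul]) fun k l hkl => ?_
  rw [hy k l hkl, ← mul_assoc (c l k), ← (hqc l k).eq, ← add_mul, hanti k l hkl, zero_mul]

theorem RightQuantum.add_q_mul_swap_eq_zero {r : ℕ} {q : Rˣ} {A : Matrix (Fin r) (Fin r) R}
    (hA : RightQuantum q A) {i i' k l : Fin r} (hi : i < i') (hkl : k < l) :
    A i' k * A i l - q * (A i k * A i' l) + q * (A i' l * A i k - q * (A i l * A i' k)) = 0 := by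
  rw [hA.2 i i' k l hi hkl]
  simp only [mul_sub, mul_add, ← mul_assoc (q : R) ((q⁻¹ : Rˣ) : R), Units.mul_inv, one_mul]
  abel

end Ring

/-- Commutation of the quantum linear forms: if `A` is right-quantum, its entries commute
with quantum variables `x` satisfying `x j * x i = q * (x i * x j)` for `i < j`, and
`X i = Σ_j A i j * x j`, then `X j * X i = q * (X i * X j)` for `i < j`. -/
theorem quantum_linear_forms_commute {R : Type*} [Ring R] {r : ℕ}
    (q : Rˣ) (hq : ∀ y : R, Commute (q : R) y)
    (A : Matrix (Fin r) (Fin r) R) (hA : RightQuantum q A)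
    (x : Fin r → R)
    (hx : ∀ i j : Fin r, i < j → x j * x i = (q : R) * (x i * x j))
    (hax : ∀ i k l : Fin r, Commute (x i) (A k l))
    (X : Fin r → R) (hX : ∀ i, X i = ∑ j, A i j * x j) :
    ∀ i j : Fin r, i < j → X j * X i = (q : R) * (X i * X j) := by
  intro i j hij
  have hexpand : ∀ m n, X m * X n = ∑ k, ∑ l, A m k * A n l * (x k * x l) := fun m n => by
    rw [hX, hX]
    exact sum_mul_sum_of_commute _ _ _ fun k l => hax k n l
  rw [← sub_eq_zero, hexpand, hexpand]
  simp only [mul_sum, ← sum_sub_distrib, ← mul_assoc (q : R) (A _ _ * A _ _), ← sub_mul]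
  exact sum_sum_mul_eq_zero_of_qcomm (q : R) x hx _ (fun _ _ => hq _)
    (fun k => sub_eq_zero.mpr (hA.1 k i j hij)) fun _ _ hkl => hA.add_q_mul_swap_eq_zero hij hkl
end

section
/- Column interchange for quantum determinants: Let A be an r×r matrix satisfying the cross-commutation relation ad = da + q^{-1}cb − qbc for every 2×2 submatrix (with a,b,c,d the entries in positions (i,j),(i,j'),(i',j),(i',j') for i<i', j<j'). If A' is obtained from A by interchanging columns i and j, then det_q(A') = (−q)^{−inv(ij)} det_q(A), where inv(ij) is the number of inversions of the transposition (i j). -/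
/-!
Swapping two adjacent columns `a`, `b = a + 1` multiplies `det_q` by `(-q)⁻¹`: pair each
permutation `π` with `π a < π b` with `π * (a b)`. The four products involved agree outside
positions `a`, `a + 1`, where they carry the four products of two entries of the `2 × 2` minor
in rows `π a < π b`, and the cross relation of that minor is exactly the identity needed.
A permutation `σ ≠ 1` has an adjacent descent, and undoing it removes one inversion, so
`det_q (A σ) = (-q)^(-inv σ) det_q A` for every column permutation `σ`; take `σ = (i j)`.
-/

section

variable {r : ℕ}

theorem invCount_one : invCount (1 : Equiv.Perm (Fin r)) = 0 := by
  rw [invCount, Finset.card_eq_zero, Finset.filter_eq_empty_iff]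
  exact fun p _ h => lt_asymm h.1 h.2

theorem swap_lt_swap_iff_of_adjacent {a b x y : Fin r} (hab : (a : ℕ) + 1 = b)
    (hxy : (x, y) ≠ (a, b)) (hyx : (x, y) ≠ (b, a)) :
    Equiv.swap a b x < Equiv.swap a b y ↔ x < y := by
  simp only [ne_eq, Prod.mk.injEq, not_and] at hxy hyx
  rw [Equiv.swap_apply_def, Equiv.swap_apply_def]
  split_ifs <;> simp only [Fin.ext_iff, Fin.lt_def] at * <;> omega

theorem invCount_mul_swap_of_lt {π : Equiv.Perm (Fin r)} {a b : Fin r}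
    (hab : (a : ℕ) + 1 = b) (h : π a < π b) :
    invCount (π * Equiv.swap a b) = invCount π + 1 := by
  have hab' : a < b := by rw [Fin.lt_def]; omega
  rw [invCount, invCount, ← Finset.card_insert_of_notMem (a := (b, a)) (by simp [hab'.not_gt])]
  refine Finset.card_equiv (Equiv.prodCongr (Equiv.swap a b) (Equiv.swap a b)) fun ⟨x, y⟩ => ?_
  rw [Finset.mem_filter, Finset.mem_insert, Finset.mem_filter]
  simp only [Finset.mem_univ, true_and, Equiv.prodCongr_apply, Prod.map_apply,
    Equiv.Perm.mul_apply]
  by_cases hxy : (x, y) = (a, b)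
  · simp_all
  by_cases hyx : (x, y) = (b, a)
  · simp_all [lt_asymm h]
  have hne : (Equiv.swap a b x, Equiv.swap a b y) ≠ (b, a) := by
    simpa [Equiv.swap_apply_eq_iff] using hxy
  rw [swap_lt_swap_iff_of_adjacent hab hxy hyx, or_iff_right hne]

theorem exists_adjacent_descent {σ : Equiv.Perm (Fin r)} (hσ : σ ≠ 1) :
    ∃ a b : Fin r, (a : ℕ) + 1 = b ∧ σ b < σ a := by
  by_contra! hasc
  cases r with
  | zero => exact hσ (Subsingleton.elim _ _)
  | succ n =>
    have hmono : StrictMono σ := Fin.strictMono_iff_lt_succ.2 fun i =>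
      lt_of_le_of_ne (hasc _ _ rfl) (σ.injective.ne (Fin.castSucc_lt_succ (i := i)).ne)
    apply hσ
    ext k
    exact congrArg (fun f : Fin (n + 1) ≃o Fin (n + 1) => (f k : ℕ))
      (Subsingleton.elim (StrictMono.orderIsoOfSurjective σ hmono σ.surjective) (OrderIso.refl _))

theorem exists_prod_ofFn_eq_mul_mul {M : Type*} [Monoid M] (f₀ : Fin r → M) {a b : Fin r}
    (hab : (a : ℕ) + 1 = b) :
    ∃ P S : M, ∀ f : Fin r → M, (∀ k, k ≠ a → k ≠ b → f k = f₀ k) →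
      (List.ofFn f).prod = P * (f a * f b) * S := by
  refine ⟨((List.ofFn f₀).take a).prod, ((List.ofFn f₀).drop (a + 2)).prod, fun f hf => ?_⟩
  have hoff : ∀ k : Fin r, ((k : ℕ) < a ∨ (a : ℕ) + 2 ≤ k) → f k = f₀ k := fun k hk =>
    hf k (fun h => by subst h; omega) (fun h => by subst h; omega)
  have htake : (List.ofFn f).take a = (List.ofFn f₀).take a :=
    List.ext_getElem (by simp) fun n h _ => by
      simp only [List.length_take, List.length_ofFn, lt_min_iff] at h
      simpa using hoff ⟨n, h.2⟩ (Or.inl h.1)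
  have hdrop : (List.ofFn f).drop (a + 2) = (List.ofFn f₀).drop (a + 2) :=
    List.ext_getElem (by simp) fun n h _ => by
      simp only [List.length_drop, List.length_ofFn] at h
      simpa using hoff ⟨a + 2 + n, by omega⟩ (Or.inr (by simp))
  have hb : (a : ℕ) + 1 < r := hab ▸ b.isLt
  rw [← List.prod_take_mul_prod_drop (List.ofFn f) a, htake,
    List.drop_eq_getElem_cons (by simp), List.drop_eq_getElem_cons (by simpa using hb),
    hdrop]
  simp only [List.getElem_ofFn, List.prod_cons, mul_assoc]
  congr 3
  exact congrArg f (Fin.ext hab)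

theorem sum_perm_eq_sum_filter_add_mul_swap {M : Type*} [AddCommMonoid M]
    (g : Equiv.Perm (Fin r) → M) {a b : Fin r} (hab : a ≠ b) :
    ∑ π, g π = ∑ π with π a < π b, (g π + g (π * Equiv.swap a b)) := by
  rw [Finset.sum_add_distrib, ← Finset.sum_filter_add_sum_filter_not _ fun π => π a < π b]
  congr 1
  refine Finset.sum_nbij' (· * Equiv.swap a b) (· * Equiv.swap a b) ?_ ?_ ?_ ?_ ?_ <;>
    intro π <;> simp [mul_assoc]
  · exact fun h => lt_of_le_of_ne h (π.injective.ne hab.symm)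
  · exact le_of_lt

theorem zpow_neg_natCast_succ {G : Type*} [Group G] (g : G) (n : ℕ) :
    g ^ (-((n + 1 : ℕ) : ℤ)) = g ^ (-(n : ℤ)) * g⁻¹ := by
  rw [← zpow_neg_one, ← zpow_add]
  push_cast
  ring_nf

variable {R : Type*} [Ring R]

theorem commute_inv_neg {q : Rˣ} (hq : ∀ y : R, Commute (q : R) y) (y : R) :
    Commute (((-q)⁻¹ : Rˣ) : R) y :=
  Commute.units_inv_left (by rw [Units.val_neg]; exact (hq y).neg_left)

theorem add_inv_neg_mul_eq_of_cross_relation {q : Rˣ} {α β γ δ : R}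
    (h : α * δ = δ * α + ((q⁻¹ : Rˣ) : R) * (γ * β) - (q : R) * (β * γ)) :
    β * γ + (((-q)⁻¹ : Rˣ) : R) * (δ * α) =
      (((-q)⁻¹ : Rˣ) : R) * (α * δ) +
        (((-q)⁻¹ : Rˣ) : R) * ((((-q)⁻¹ : Rˣ) : R) * (γ * β)) := by
  have hinv : (((-q)⁻¹ : Rˣ) : R) = -((q⁻¹ : Rˣ) : R) := by rw [inv_neg, Units.val_neg]
  have hcancel : ((q⁻¹ : Rˣ) : R) * ((q : R) * (β * γ)) = β * γ := by
    rw [← mul_assoc, Units.inv_mul, one_mul]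
  rw [hinv, h]
  simp only [neg_mul, mul_neg, neg_neg, mul_sub, mul_add, hcancel]
  abel

theorem detq_submatrix_swap_of_adjacent (q : Rˣ) (hq : ∀ y : R, Commute (q : R) y)
    (B : Matrix (Fin r) (Fin r) R) {a b : Fin r} (hab : (a : ℕ) + 1 = b)
    (hB : ∀ i i' : Fin r, i < i' →
      B i a * B i' b =
        B i' b * B i a + ((q⁻¹ : Rˣ) : R) * (B i' a * B i b) - (q : R) * (B i b * B i' a)) :
    detq q (B.submatrix id (Equiv.swap a b)) = (((-q)⁻¹ : Rˣ) : R) * detq q B := by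
  have hab' : a ≠ b := fun h => by subst h; omega
  unfold detq
  rw [Finset.mul_sum, sum_perm_eq_sum_filter_add_mul_swap _ hab',
    sum_perm_eq_sum_filter_add_mul_swap _ hab']
  refine Finset.sum_congr rfl fun π hπ => ?_
  replace hπ : π a < π b := (Finset.mem_filter.1 hπ).2
  obtain ⟨P, S, hPS⟩ := exists_prod_ofFn_eq_mul_mul (fun k => B (π k) k) hab
  have hoff : ∀ k, k ≠ a → k ≠ b → Equiv.swap a b k = k := fun _ =>
    Equiv.swap_apply_of_ne_of_ne
  simp only [Matrix.submatrix_apply, id, Equiv.Perm.mul_apply]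
  rw [hPS (fun k => B (π k) (Equiv.swap a b k)) fun k hka hkb => by simp [hoff k hka hkb],
    hPS (fun k => B (π (Equiv.swap a b k)) (Equiv.swap a b k)) fun k hka hkb => by
      simp [hoff k hka hkb],
    hPS (fun k => B (π (Equiv.swap a b k)) k) fun k hka hkb => by simp [hoff k hka hkb],
    hPS (fun k => B (π k) k) fun _ _ _ => rfl, invCount_mul_swap_of_lt hab hπ,
    zpow_neg_natCast_succ, Units.val_mul]
  simp only [Equiv.swap_apply_left, Equiv.swap_apply_right]
  have key := congrArg (fun t => (((-q) ^ (-(invCount π : ℤ)) : Rˣ) : R) * (P * t * S))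
    (add_inv_neg_mul_eq_of_cross_relation (hB _ _ hπ))
  simpa only [mul_add, add_mul, mul_assoc, (commute_inv_neg hq _).left_comm] using key

theorem detq_submatrix_perm (q : Rˣ) (hq : ∀ y : R, Commute (q : R) y)
    (A : Matrix (Fin r) (Fin r) R)
    (hA : ∀ i i' j j' : Fin r, i < i' → j < j' →
      A i j * A i' j' =
        A i' j' * A i j + ((q⁻¹ : Rˣ) : R) * (A i' j * A i j') - (q : R) * (A i j' * A i' j))
    (σ : Equiv.Perm (Fin r)) :
    detq q (A.submatrix id σ) = (((-q) ^ (-(invCount σ : ℤ)) : Rˣ) : R) * detq q A := by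
  by_cases hσ : σ = 1
  · simp [hσ, invCount_one]
  obtain ⟨a, b, hab, hdesc⟩ := exists_adjacent_descent hσ
  set τ := σ * Equiv.swap a b
  have hτ : τ a < τ b := by simpa [τ] using hdesc
  have hστ : σ = τ * Equiv.swap a b := by simp [τ, mul_assoc]
  have hinv : invCount σ = invCount τ + 1 := hστ ▸ invCount_mul_swap_of_lt hab hτ
  calc detq q (A.submatrix id σ)
      = detq q ((A.submatrix id τ).submatrix id (Equiv.swap a b)) := by
        rw [Matrix.submatrix_submatrix, hστ]; rfl
    _ = (((-q)⁻¹ : Rˣ) : R) * detq q (A.submatrix id τ) :=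
        detq_submatrix_swap_of_adjacent q hq _ hab fun i i' hii' => hA i i' _ _ hii' hτ
    _ = (((-q) ^ (-(invCount σ : ℤ)) : Rˣ) : R) * detq q A := by
        rw [detq_submatrix_perm q hq A hA τ, hinv, zpow_neg_natCast_succ, Units.val_mul,
          (commute_inv_neg hq _).left_comm, mul_assoc]
termination_by invCount σ
decreasing_by exact hinv ▸ Nat.lt_succ_self _

end

/-- Column interchange for quantum determinants: if every `2 × 2` submatrix of `A`
satisfies the cross commutation relation, and `A'` is obtained from `A` by
interchanging columns `i` and `j`, then `det_q(A') = (-q)^{-inv((i j))} det_q(A)`. -/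
theorem detq_swap_columns {R : Type*} [Ring R] {r : ℕ}
    (q : Rˣ) (hq : ∀ y : R, Commute (q : R) y)
    (A : Matrix (Fin r) (Fin r) R)
    (hA : ∀ i i' j j' : Fin r, i < i' → j < j' →
      A i j * A i' j' =
        A i' j' * A i j + ((q⁻¹ : Rˣ) : R) * (A i' j * A i j') - (q : R) * (A i j' * A i' j))
    (i j : Fin r) :
    detq q (A.submatrix id (Equiv.swap i j)) =
      (((-q) ^ (-(invCount (Equiv.swap i j) : ℤ)) : Rˣ) : R) * detq q A :=
  detq_submatrix_perm q hq A hA (Equiv.swap i j)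
end

section
/- The matrix B with entries b_{ii} = M_i − a_{ii} and b_{ij} = −q_{ij} a_{ij} (i ≠ j), built from a right-quantum matrix A and the shift/multiplication operators, is itself right-quantum: each 2×2 submatrix (a b; c d) of B satisfies ca = qac, db = qbd, ad = da + q^{-1}cb − qbc. -/
/-- The monomial `q_{ij}` in the multiplication operators `Q k` ("`q^{m_k}`"):
`q_{ij} = q^{m_i + 2m_{i+1} + ⋯ + 2m_{j-1} + m_j}` for `i < j`, and
`q_{ij} = q^{−m_j − 2m_{j+1} − ⋯ − 2m_{i-1} − m_i}` for `i > j`. -/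
noncomputable def qcoef {E : Type*} [Ring E] {r : ℕ} (Q : Fin r → Eˣ) (i j : Fin r) : Eˣ :=
  if i < j then
    Q i * (List.ofFn fun k => if i < k ∧ k < j then Q k ^ 2 else 1).prod * Q j
  else if j < i then
    (Q j * (List.ofFn fun k => if j < k ∧ k < i then Q k ^ 2 else 1).prod * Q i)⁻¹
  else 1

/-- The operator matrix `B`: diagonal entries `M_i − a_{ii}`, off-diagonal entries
`−q_{ij} a_{ij}`. -/
noncomputable def opMatrix {E : Type*} [Ring E] {r : ℕ} (Q : Fin r → Eˣ)
    (M : Fin r → E) (A : Matrix (Fin r) (Fin r) E) : Matrix (Fin r) (Fin r) E :=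
  Matrix.of fun i j => if i = j then M i - A i i else -((qcoef Q i j : E) * A i j)

/-! ### Auxiliary lemmas -/

lemma commute_ofFn_prod {M : Type*} [Monoid M] {n : ℕ} (f : Fin n → M) (a : M)
    (h : ∀ k, Commute a (f k)) : Commute a (List.ofFn f).prod :=
  Commute.list_prod_right _ _ (by
    intro x hx
    rw [List.mem_ofFn] at hx
    obtain ⟨k, rfl⟩ := hx
    exact h k)

lemma ofFn_prod_mul_ofFn_prod {M : Type*} [Monoid M] : ∀ {n : ℕ} (f g : Fin n → M),
    (∀ k l, Commute (f k) (g l)) →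
    (List.ofFn f).prod * (List.ofFn g).prod = (List.ofFn fun k => f k * g k).prod := by
  intro n
  induction n with
  | zero => intro f g _; simp
  | succ n ih =>
    intro f g h
    rw [List.ofFn_succ, List.ofFn_succ, List.ofFn_succ, List.prod_cons, List.prod_cons,
      List.prod_cons]
    have hc : Commute (g 0) (List.ofFn (f ∘ Fin.succ)).prod :=
      commute_ofFn_prod _ _ (fun k => (h k.succ 0).symm)
    calc f 0 * (List.ofFn (f ∘ Fin.succ)).prod * (g 0 * (List.ofFn (g ∘ Fin.succ)).prod)
        = f 0 * (((List.ofFn (f ∘ Fin.succ)).prod * g 0) * (List.ofFn (g ∘ Fin.succ)).prod) := by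
          rw [mul_assoc, mul_assoc]
      _ = f 0 * (g 0 * ((List.ofFn (f ∘ Fin.succ)).prod * (List.ofFn (g ∘ Fin.succ)).prod)) := by
          rw [← hc.eq, mul_assoc]
      _ = f 0 * g 0 * ((List.ofFn (f ∘ Fin.succ)).prod * (List.ofFn (g ∘ Fin.succ)).prod) := by
          rw [← mul_assoc]
      _ = _ := by
          rw [ih (f ∘ Fin.succ) (g ∘ Fin.succ) (fun k l => h k.succ l.succ)]
          rfl

lemma ofFn_prod_ite {M : Type*} [Monoid M] : ∀ {n : ℕ} (i : Fin n) (x : Fin n → M),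
    (List.ofFn fun k => if k = i then x k else 1).prod = x i := by
  intro n
  induction n with
  | zero => exact fun i => i.elim0
  | succ n ih =>
    intro i x
    rw [List.ofFn_succ, List.prod_cons]
    rcases Fin.eq_zero_or_eq_succ i with rfl | ⟨j, rfl⟩
    · have : (List.ofFn fun k : Fin n => if (k.succ : Fin (n+1)) = 0 then x k.succ else 1).prod
          = (1 : M) := by
        have : (fun k : Fin n => if (k.succ : Fin (n+1)) = 0 then x k.succ else 1)
            = fun _ => (1 : M) := by
          funext k; simp [Fin.succ_ne_zero]
        rw [this]; simp
      simp [this]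
    · have h0 : ((0 : Fin (n+1)) = j.succ) = False := by
        simp [(Fin.succ_ne_zero j).symm]
      have : (fun k : Fin n => if (k.succ : Fin (n+1)) = j.succ then x k.succ else 1)
          = fun k : Fin n => if k = j then (fun k : Fin n => x k.succ) k else 1 := by
        funext k; simp [Fin.succ_inj]
      rw [this, ih j (fun k => x k.succ)]
      simp [h0]

lemma pass_ofFn {M : Type*} [Monoid M] : ∀ {n : ℕ} (f c : Fin n → M) (x : M),
    (∀ k y, Commute (c k) y) → (∀ k, x * f k = c k * (f k * x)) →
    x * (List.ofFn f).prod = (List.ofFn c).prod * ((List.ofFn f).prod * x) := by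
  intro n
  induction n with
  | zero => intro f c x _ _; simp
  | succ n ih =>
    intro f c x hc h
    rw [List.ofFn_succ, List.ofFn_succ, List.prod_cons, List.prod_cons]
    have ihr := ih (f ∘ Fin.succ) (c ∘ Fin.succ) x (fun k => hc k.succ) (fun k => h k.succ)
    calc x * (f 0 * (List.ofFn (f ∘ Fin.succ)).prod)
        = (x * f 0) * (List.ofFn (f ∘ Fin.succ)).prod := by rw [mul_assoc]
      _ = c 0 * (f 0 * (x * (List.ofFn (f ∘ Fin.succ)).prod)) := by
          rw [h 0, mul_assoc, mul_assoc]
      _ = c 0 * (f 0 * ((List.ofFn (c ∘ Fin.succ)).prod * ((List.ofFn (f ∘ Fin.succ)).prod * x))) := by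
          rw [ihr]
      _ = c 0 * (List.ofFn (c ∘ Fin.succ)).prod *
            (f 0 * (List.ofFn (f ∘ Fin.succ)).prod * x) := by
          have hcp : ∀ y : M, Commute (List.ofFn (c ∘ Fin.succ)).prod y := fun y =>
            (commute_ofFn_prod _ y (fun k => (hc k.succ y).symm)).symm
          simp only [← mul_assoc]
          rw [mul_assoc (c 0) (f 0), ← (hcp (f 0)).eq]
          simp only [← mul_assoc]
      _ = _ := rfl

lemma unit_pass {M : Type*} [Monoid M] (c : M) (hc : ∀ y, Commute c y) (u : Mˣ) (m : M)
    (h : m * ↑u = c * (↑u * m)) : ↑u⁻¹ * m = c * (m * ↑u⁻¹) := by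
  calc (↑u⁻¹ : M) * m = ↑u⁻¹ * (m * ↑u) * ↑u⁻¹ := by
        rw [← mul_assoc, mul_assoc ((↑u⁻¹ : M) * m), Units.mul_inv, mul_one]
    _ = ↑u⁻¹ * (c * (↑u * m)) * ↑u⁻¹ := by rw [h]
    _ = c * (m * ↑u⁻¹) := by
        simp only [← mul_assoc]
        rw [← (hc (↑u⁻¹ : M)).eq, mul_assoc c, Units.inv_mul, mul_one]

lemma swap4 {G : Type*} [Group G] {a b c : G} (d : G) (hbc : Commute b c) (hac : Commute a c)
    (hab : Commute a b) : a⁻¹ * b * (c⁻¹ * d) = c⁻¹ * b * (a⁻¹ * d) := by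
  simp only [← mul_assoc]
  rw [mul_assoc a⁻¹ b, (hbc.inv_right).eq, ← mul_assoc, (hac.inv_inv).eq,
    mul_assoc c⁻¹ a⁻¹, (hab.inv_left).eq, ← mul_assoc]

lemma val_ofFn_prod {E : Type*} [Monoid E] {n : ℕ} (f : Fin n → Eˣ) :
    (((List.ofFn f).prod : Eˣ) : E) = (List.ofFn fun k => ((f k : E))).prod := by
  change (Units.coeHom E) (List.ofFn f).prod = _
  rw [map_list_prod, List.map_ofFn]
  rfl

lemma units_commute_of_val {E : Type*} [Monoid E] {u w : Eˣ}
    (h : Commute (u : E) (w : E)) : Commute u w := by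
  have : ((u * w : Eˣ) : E) = ((w * u : Eˣ) : E) := by
    rw [Units.val_mul, Units.val_mul]; exact h
  exact Units.ext this

/-- `V_k = (∏_{l<k} Q_l²) · Q_k`, so that `q_{ij} = V_i⁻¹ V_j`. -/
noncomputable def vfun {E : Type*} [Ring E] {r : ℕ} (Q : Fin r → Eˣ) (k : Fin r) : Eˣ :=
  (List.ofFn fun l => if l < k then Q l ^ 2 else 1).prod * Q k

section
variable {E : Type*} [Ring E] {r : ℕ} (Q : Fin r → Eˣ)
variable (hQQ : ∀ i j : Fin r, Commute ((Q i : E)) ((Q j : E)))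
include hQQ

lemma hQu : ∀ k l : Fin r, Commute (Q k) (Q l) := fun k l => units_commute_of_val (hQQ k l)

lemma hcif : ∀ (P1 P2 : Prop) [Decidable P1] [Decidable P2] (k l : Fin r),
    Commute (if P1 then Q k ^ 2 else 1) (if P2 then Q l ^ 2 else 1) := by
  intro P1 P2 _ _ k l
  split_ifs
  · exact (hQu Q hQQ k l).pow_pow 2 2
  · exact Commute.one_right _
  · exact Commute.one_left _
  · exact Commute.one_left _

lemma vfun_commute (a : Eˣ) (ha : ∀ m : Fin r, Commute (Q m) a) (k : Fin r) :
    Commute (vfun Q k) a := by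
  unfold vfun
  refine Commute.mul_left ?_ (ha k)
  refine (commute_ofFn_prod _ a ?_).symm
  intro m
  split_ifs
  · exact ((ha m).pow_left 2).symm
  · exact Commute.one_right _

lemma hvv : ∀ k l : Fin r, Commute (vfun Q k) (vfun Q l) := fun k l =>
  vfun_commute Q hQQ (vfun Q l)
    (fun m => (vfun_commute Q hQQ (Q m) (fun m' => hQu Q hQQ m' m) l).symm) k

lemma qcoef_eq (i j : Fin r) : qcoef Q i j = (vfun Q i)⁻¹ * vfun Q j := by
  have hlt : ∀ i j : Fin r, i < j → qcoef Q i j = (vfun Q i)⁻¹ * vfun Q j := by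
    intro i j hij
    have hsplit :
        (List.ofFn fun l => if l < j then Q l ^ 2 else 1).prod
          = (List.ofFn fun l => if l < i then Q l ^ 2 else 1).prod * Q i ^ 2 *
            (List.ofFn fun l => if i < l ∧ l < j then Q l ^ 2 else 1).prod := by
      have e1 : (List.ofFn fun l => if l < i then Q l ^ 2 else 1).prod * Q i ^ 2
          = (List.ofFn fun l => (if l < i then Q l ^ 2 else 1) *
              (if l = i then Q l ^ 2 else 1)).prod := by
        conv_lhs => rw [← ofFn_prod_ite i (fun l : Fin r => Q l ^ 2)]
        exact ofFn_prod_mul_ofFn_prod _ _ (fun k l => hcif Q hQQ _ _ k l)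
      rw [e1, ofFn_prod_mul_ofFn_prod _ _ (fun k l => Commute.mul_left
        (hcif Q hQQ _ _ k l) (hcif Q hQQ _ _ k l))]
      congr 1
      refine congrArg List.ofFn (funext fun l => ?_)
      rcases lt_trichotomy l i with h | rfl | h
      · have h2 : l < j := h.trans hij
        simp [h, h.ne, (lt_asymm h), h2]
      · simp [lt_irrefl, hij]
      · have h2 : ¬ l < i := lt_asymm h
        have h3 : l ≠ i := (ne_of_gt h)
        by_cases h4 : l < j <;> simp [h2, h3, h, h4]
    rw [qcoef, if_pos hij]
    unfold vfun
    rw [hsplit]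
    group
  rcases lt_trichotomy i j with h | rfl | h
  · exact hlt i j h
  · rw [qcoef]
    simp [lt_irrefl]
  · have h1 : qcoef Q i j = (qcoef Q j i)⁻¹ := by
      rw [qcoef, qcoef, if_neg (lt_asymm h), if_pos h, if_pos h]
    rw [h1, hlt j i h, mul_inv_rev, inv_inv]

lemma qcoef_swap (a b c d : Fin r) :
    qcoef Q a b * qcoef Q c d = qcoef Q c b * qcoef Q a d := by
  rw [qcoef_eq Q hQQ, qcoef_eq Q hQQ, qcoef_eq Q hQQ, qcoef_eq Q hQQ]
  exact swap4 _ (hvv Q hQQ b c) (hvv Q hQQ a c) (hvv Q hQQ a b)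

end

lemma qcoef_diag {E : Type*} [Ring E] {r : ℕ} (Q : Fin r → Eˣ) (a : Fin r) :
    qcoef Q a a = 1 := by
  rw [qcoef]; simp [lt_irrefl]

lemma opMatrix_apply_ne {E : Type*} [Ring E] {r : ℕ} (Q : Fin r → Eˣ) (M : Fin r → E)
    (A : Matrix (Fin r) (Fin r) E) {i j : Fin r} (h : i ≠ j) :
    opMatrix Q M A i j = -((qcoef Q i j : E) * A i j) := by
  simp [opMatrix, h]

lemma opMatrix_apply_eq {E : Type*} [Ring E] {r : ℕ} (Q : Fin r → Eˣ) (M : Fin r → E)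
    (A : Matrix (Fin r) (Fin r) E) (i : Fin r) :
    opMatrix Q M A i i = M i - A i i := by
  simp [opMatrix]

/-- The operator matrix `B` (diagonal `M_i − a_{ii}`, off-diagonal `−q_{ij} a_{ij}`)
built from a right-quantum matrix `A` and the shift/multiplication operators is
itself right-quantum. -/
theorem opMatrix_rightQuantum {E : Type*} [Ring E] {r : ℕ}
    (q : Eˣ) (hq : ∀ y : E, Commute (q : E) y)
    (A : Matrix (Fin r) (Fin r) E) (hA : RightQuantum q A)
    (Q : Fin r → Eˣ) (M : Fin r → E)
    (hMQ : ∀ i : Fin r, M i * (Q i : E) = (q : E) * ((Q i : E) * M i))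
    (hMQ2 : ∀ i j : Fin r, i ≠ j → Commute (M i) ((Q j : E)))
    (hQQ : ∀ i j : Fin r, Commute ((Q i : E)) ((Q j : E)))
    (hMM : ∀ i j : Fin r, Commute (M i) (M j))
    (hQa : ∀ k i j : Fin r, Commute ((Q k : E)) (A i j))
    (hMa : ∀ k i j : Fin r, Commute (M k) (A i j)) :
    RightQuantum q (opMatrix Q M A) := by
  have key := qcoef_eq Q hQQ
  have qswapE : ∀ a b c d : Fin r,
      (qcoef Q a b : E) * (qcoef Q c d : E) = (qcoef Q c b : E) * (qcoef Q a d : E) := by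
    intro a b c d
    rw [← Units.val_mul, ← Units.val_mul, qcoef_swap Q hQQ]
  have qdiagE : ∀ a : Fin r, (qcoef Q a a : E) = 1 := by
    intro a; rw [qcoef_diag]; rfl
  have hQc : ∀ (z : E), (∀ k, Commute ((Q k : E)) z) →
      ∀ x y : Fin r, Commute ((qcoef Q x y : E)) z := by
    intro z hz x y
    have hv : ∀ k, Commute ((vfun Q k : E)) z := by
      intro k
      rw [vfun, Units.val_mul]
      refine Commute.mul_left ?_ (hz k)
      rw [val_ofFn_prod]
      refine (commute_ofFn_prod _ z ?_).symm
      intro m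
      split_ifs
      · rw [Units.val_pow_eq_pow_val]; exact ((hz m).symm).pow_right 2
      · simp
    rw [key x y, Units.val_mul]
    exact Commute.mul_left ((hv x).units_inv_left) (hv y)
  have hcA : ∀ x y i j : Fin r, Commute ((qcoef Q x y : E)) (A i j) :=
    fun x y i j => hQc (A i j) (fun k => hQa k i j) x y
  have hcc : ∀ x y z w : Fin r, Commute ((qcoef Q x y : E)) ((qcoef Q z w : E)) :=
    fun x y z w => hQc _ (fun k => (hQc ((Q k : E)) (fun k' => hQQ k' k) z w).symm) x y
  have hq' : ∀ y : E, Commute ((q⁻¹ : Eˣ) : E) y := fun y => (hq y).units_inv_left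
  have hq'q : ((q⁻¹ : Eˣ) : E) * (q : E) = 1 := Units.inv_mul q
  -- commutation of M with the vfun units
  have MvP : ∀ i k : Fin r, k ≤ i →
      Commute (M i) (((List.ofFn fun l => if l < k then Q l ^ 2 else 1).prod : Eˣ) : E) := by
    intro i k hk
    rw [val_ofFn_prod]
    refine commute_ofFn_prod _ _ ?_
    intro l
    split_ifs with hl
    · rw [Units.val_pow_eq_pow_val]
      exact (hMQ2 i l (lt_of_lt_of_le hl hk).ne').pow_right 2
    · simp
  have Mv_lt : ∀ i k : Fin r, k < i → Commute (M i) ((vfun Q k : E)) := by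
    intro i k h
    rw [vfun, Units.val_mul]
    exact (MvP i k h.le).mul_right (hMQ2 i k h.ne')
  have Mv_eq : ∀ i : Fin r, M i * ((vfun Q i : E)) = (q : E) * (((vfun Q i : E)) * M i) := by
    intro i
    rw [vfun, Units.val_mul]
    linear_combination (norm := noncomm_ring)
      (MvP i i le_rfl).eq * ((Q i : E))
      + (((List.ofFn fun l => if l < i then Q l ^ 2 else 1).prod : Eˣ) : E) * hMQ i
      - (hq (((List.ofFn fun l => if l < i then Q l ^ 2 else 1).prod : Eˣ) : E)).eq
          * ((Q i : E) * M i)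
  have Mv_gt : ∀ i k : Fin r, i < k →
      M i * ((vfun Q k : E)) = (q : E) * ((q : E) * (((vfun Q k : E)) * M i)) := by
    intro i k h
    have hpass := pass_ofFn (fun l => (((if l < k then Q l ^ 2 else 1 : Eˣ)) : E))
      (fun l => if l = i then (q : E) * (q : E) else 1) (M i)
      (by
        intro l y
        split_ifs
        · exact Commute.mul_left (hq y) (hq y)
        · exact Commute.one_left _)
      (by
        intro l
        by_cases hl : l = i
        · rw [if_pos hl, hl, if_pos h, Units.val_pow_eq_pow_val, sq]
          linear_combination (norm := noncomm_ring)
            hMQ i * (Q i : E) + (q : E) * ((Q i : E) * hMQ i)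
            - (q : E) * ((hq ((Q i : E))).eq * ((Q i : E) * M i))
        · rw [if_neg hl]
          split_ifs with h2
          · rw [Units.val_pow_eq_pow_val]
            linear_combination (norm := noncomm_ring)
              ((hMQ2 i l (fun e => hl e.symm)).pow_right 2).eq
          · simp)
    rw [ofFn_prod_ite i (fun _ => (q : E) * (q : E))] at hpass
    rw [vfun, Units.val_mul, val_ofFn_prod]
    linear_combination (norm := noncomm_ring)
      hpass * ((Q k : E))
      + ((q : E) * (q : E) * (List.ofFn fun l => (((if l < k then Q l ^ 2 else 1 : Eˣ)) : E)).prod)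
          * (hMQ2 i k h.ne).eq
  have inv_eq : ∀ i : Fin r,
      (((vfun Q i)⁻¹ : Eˣ) : E) * M i = (q : E) * (M i * (((vfun Q i)⁻¹ : Eˣ) : E)) :=
    fun i => unit_pass (q : E) hq (vfun Q i) (M i) (Mv_eq i)
  have inv_gt : ∀ i k : Fin r, i < k →
      (((vfun Q k)⁻¹ : Eˣ) : E) * M i
        = (q : E) * (q : E) * (M i * (((vfun Q k)⁻¹ : Eˣ) : E)) := by
    intro i k h
    exact unit_pass ((q : E) * (q : E)) (fun y => Commute.mul_left (hq y) (hq y))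
      (vfun Q k) (M i) (by rw [Mv_gt i k h, ← mul_assoc])
  -- the six commutation facts between M and the coefficients
  have fact_alpha : ∀ i i' : Fin r, i < i' →
      ((qcoef Q i' i : E)) * M i = (q : E) * (M i * ((qcoef Q i' i : E))) := by
    intro i i' h
    rw [key i' i, Units.val_mul]
    apply (Units.mul_right_inj q).mp
    linear_combination (norm := noncomm_ring)
      (hq ((((vfun Q i')⁻¹ : Eˣ)) : E)).eq * (((vfun Q i : Eˣ) : E) * M i)
      - ((((vfun Q i')⁻¹ : Eˣ)) : E) * Mv_eq i
      + inv_gt i i' h * ((vfun Q i : Eˣ) : E)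
  have fact_beta : ∀ i i' : Fin r, i < i' →
      M i' * ((qcoef Q i i' : E)) = (q : E) * (((qcoef Q i i' : E)) * M i') := by
    intro i i' h
    rw [key i i', Units.val_mul]
    linear_combination (norm := noncomm_ring)
      ((Mv_lt i' i h).units_inv_right).eq * ((vfun Q i' : Eˣ) : E)
      + ((((vfun Q i)⁻¹ : Eˣ)) : E) * Mv_eq i'
      - (hq ((((vfun Q i)⁻¹ : Eˣ)) : E)).eq * (((vfun Q i' : Eˣ) : E) * M i')
  have fact_gamma : ∀ i i' j' : Fin r, i < i' → i < j' →
      M i * ((qcoef Q i' j' : E)) = ((qcoef Q i' j' : E)) * M i := by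
    intro i i' j' h1 h2
    rw [key i' j', Units.val_mul]
    apply (Units.mul_right_inj q).mp
    apply (Units.mul_right_inj q).mp
    linear_combination (norm := noncomm_ring)
      - inv_gt i i' h1 * ((vfun Q j' : Eˣ) : E)
      + ((((vfun Q i')⁻¹ : Eˣ)) : E) * Mv_gt i j' h2
      - (hq ((((vfun Q i')⁻¹ : Eˣ)) : E)).eq * ((q : E) * (((vfun Q j' : Eˣ) : E) * M i))
      - (q : E) * ((hq ((((vfun Q i')⁻¹ : Eˣ)) : E)).eq * (((vfun Q j' : Eˣ) : E) * M i))
  have fact_delta : ∀ i' i j : Fin r, i < i' → j < i' →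
      M i' * ((qcoef Q i j : E)) = ((qcoef Q i j : E)) * M i' := by
    intro i' i j h1 h2
    rw [key i j, Units.val_mul]
    exact (((Mv_lt i' i h1).units_inv_right).mul_right (Mv_lt i' j h2)).eq
  have fact_eps : ∀ j i i' : Fin r, j < i → i < i' →
      ((qcoef Q i' j : E)) * M i = (q : E) * ((q : E) * (M i * ((qcoef Q i' j : E)))) := by
    intro j i i' h1 h2
    rw [key i' j, Units.val_mul]
    linear_combination (norm := noncomm_ring)
      ((((vfun Q i')⁻¹ : Eˣ)) : E) * ((Mv_lt i j h1).symm).eq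
      + inv_gt i i' h2 * ((vfun Q j : Eˣ) : E)
  have fact_zeta : ∀ i i' j' : Fin r, i < i' → i' < j' →
      M i' * ((qcoef Q i j' : E)) = (q : E) * ((q : E) * (((qcoef Q i j' : E)) * M i')) := by
    intro i i' j' h1 h2
    rw [key i j', Units.val_mul]
    linear_combination (norm := noncomm_ring)
      ((Mv_lt i' i h1).units_inv_right).eq * ((vfun Q j' : Eˣ) : E)
      + ((((vfun Q i)⁻¹ : Eˣ)) : E) * Mv_gt i' j' h2
      - (hq ((((vfun Q i)⁻¹ : Eˣ)) : E)).eq * ((q : E) * (((vfun Q j' : Eˣ) : E) * M i'))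
      - (q : E) * ((hq ((((vfun Q i)⁻¹ : Eˣ)) : E)).eq * (((vfun Q j' : Eˣ) : E) * M i'))
  constructor
  · -- column relations
    intro j i i' hii'
    have hne : i ≠ i' := ne_of_lt hii'
    by_cases hij : j = i
    · rw [hij, opMatrix_apply_ne Q M A hne.symm, opMatrix_apply_eq]
      linear_combination (norm := noncomm_ring)
        ((qcoef Q i' i : E)) * (hMa i i' i).eq
        - (fact_alpha i i' hii') * (A i' i)
        + ((qcoef Q i' i : E)) * hA.1 i i i' hii'
        - (hq ((qcoef Q i' i : E))).eq * (A i i * A i' i)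
        + (q : E) * ((hcA i' i i i).eq * A i' i)
    · by_cases hij' : j = i'
      · rw [hij', opMatrix_apply_eq, opMatrix_apply_ne Q M A hne]
        linear_combination (norm := noncomm_ring)
          - (fact_beta i i' hii') * (A i i')
          - (q : E) * (((qcoef Q i i' : E)) * (hMa i' i i').eq)
          - ((hcA i i' i' i').eq * A i i')
          + ((qcoef Q i i' : E)) * hA.1 i' i i' hii'
          - (hq ((qcoef Q i i' : E))).eq * (A i i' * A i' i')
      · rw [opMatrix_apply_ne Q M A (Ne.symm hij'), opMatrix_apply_ne Q M A (Ne.symm hij)]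
        linear_combination (norm := noncomm_ring)
          - ((qcoef Q i' j : E)) * ((hcA i j i' j).eq * A i j)
          + (((qcoef Q i' j : E)) * ((qcoef Q i j : E))) * hA.1 j i i' hii'
          - (hq (((qcoef Q i' j : E)) * ((qcoef Q i j : E)))).eq * (A i j * A i' j)
          + (q : E) * ((hcc i' j i j).eq * (A i j * A i' j))
          + (q : E) * (((qcoef Q i j : E)) * ((hcA i' j i j).eq * A i' j))
  · -- cross relations
    intro i i' j j' hii' hjj'
    have hne : i ≠ i' := ne_of_lt hii'
    by_cases hij : i = j
    · by_cases hi'j' : i' = j'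
      · -- both diagonal
        rw [← hij, ← hi'j', opMatrix_apply_eq, opMatrix_apply_eq,
          opMatrix_apply_ne Q M A hne.symm, opMatrix_apply_ne Q M A hne]
        have hc341 : (qcoef Q i' i : E) * (qcoef Q i i' : E) = 1 := by
          linear_combination (norm := noncomm_ring)
            qswapE i' i i i' + qdiagE i * (qcoef Q i' i' : E) + qdiagE i'
        have hc431 : (qcoef Q i i' : E) * (qcoef Q i' i : E) = 1 := by
          linear_combination (norm := noncomm_ring)
            qswapE i i' i' i + qdiagE i' * (qcoef Q i i : E) + qdiagE i
        linear_combination (norm := noncomm_ring)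
          (hMM i i').eq - (hMa i i' i').eq - (hMa i' i i).symm.eq
          + hA.2 i i' i i' hii' hii'
          - ( - (((q⁻¹ : Eˣ) : E) * ((qcoef Q i' i : E) * ((hcA i i' i' i).eq * A i i')))
              + ((q⁻¹ : Eˣ) : E) * hc341 * (A i' i * A i i') )
          + ( - ((q : E) * ((qcoef Q i i' : E) * ((hcA i' i i i').eq * A i' i)))
              + (q : E) * hc431 * (A i i' * A i' i) )
      · -- i = j only
        rw [← hij] at hjj' ⊢
        have hijlt : i < j' := hjj'
        rw [opMatrix_apply_eq, opMatrix_apply_ne Q M A hi'j',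
          opMatrix_apply_ne Q M A hne.symm, opMatrix_apply_ne Q M A (ne_of_lt hijlt)]
        have hc34R : (qcoef Q i' i : E) * (qcoef Q i j' : E) = (qcoef Q i' j' : E) := by
          linear_combination (norm := noncomm_ring)
            qswapE i' i i j' + qdiagE i * (qcoef Q i' j' : E)
        have hc43R : (qcoef Q i j' : E) * (qcoef Q i' i : E) = (qcoef Q i' j' : E) := by
          linear_combination (norm := noncomm_ring)
            qswapE i j' i' i + (qcoef Q i' j' : E) * qdiagE i
        have R1 : M i * ((qcoef Q i' j' : E) * A i' j')
            = ((qcoef Q i' j' : E) * A i' j') * M i := by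
          linear_combination (norm := noncomm_ring)
            fact_gamma i i' j' hii' hijlt * A i' j'
            + (qcoef Q i' j' : E) * (hMa i i' j').eq
        have R4 : ((q⁻¹ : Eˣ) : E) * (((qcoef Q i' i : E) * A i' i) * ((qcoef Q i j' : E) * A i j'))
            = (qcoef Q i' j' : E) * (((q⁻¹ : Eˣ) : E) * (A i' i * A i j')) := by
          linear_combination (norm := noncomm_ring)
            - (((q⁻¹ : Eˣ) : E) * ((qcoef Q i' i : E) * ((hcA i j' i' i).eq * A i j')))
            + (hq' ((qcoef Q i' i : E) * (qcoef Q i j' : E))).eq * (A i' i * A i j')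
            + hc34R * (((q⁻¹ : Eˣ) : E) * (A i' i * A i j'))
        have R5 : (q : E) * (((qcoef Q i j' : E) * A i j') * ((qcoef Q i' i : E) * A i' i))
            = (qcoef Q i' j' : E) * ((q : E) * (A i j' * A i' i)) := by
          linear_combination (norm := noncomm_ring)
            - ((q : E) * ((qcoef Q i j' : E) * ((hcA i' i i j').eq * A i' i)))
            + (hq ((qcoef Q i j' : E) * (qcoef Q i' i : E))).eq * (A i j' * A i' i)
            + hc43R * ((q : E) * (A i j' * A i' i))
        linear_combination (norm := noncomm_ring)
          - R1 - ((hcA i' j' i i).eq * A i' j')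
          + (qcoef Q i' j' : E) * hA.2 i i' i j' hii' hijlt
          - R4 + R5
    · by_cases hi'j' : i' = j'
      · -- i' = j' only
        rw [← hi'j'] at hjj' ⊢
        have hjt : j < i' := hjj'
        rw [opMatrix_apply_ne Q M A hij, opMatrix_apply_eq,
          opMatrix_apply_ne Q M A (ne_of_gt hjt), opMatrix_apply_ne Q M A hne]
        have hc34S : (qcoef Q i' j : E) * (qcoef Q i i' : E) = (qcoef Q i j : E) := by
          linear_combination (norm := noncomm_ring)
            qswapE i' j i i' + (qcoef Q i j : E) * qdiagE i'
        have hc43S : (qcoef Q i i' : E) * (qcoef Q i' j : E) = (qcoef Q i j : E) := by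
          linear_combination (norm := noncomm_ring)
            qswapE i i' i' j + qdiagE i' * (qcoef Q i j : E)
        have S1 : ((qcoef Q i j : E) * A i j) * M i'
            = M i' * ((qcoef Q i j : E) * A i j) := by
          linear_combination (norm := noncomm_ring)
            - ((qcoef Q i j : E) * (hMa i' i j).eq)
            - fact_delta i' i j hii' hjt * A i j
        have S3 : ((q⁻¹ : Eˣ) : E) * (((qcoef Q i' j : E) * A i' j) * ((qcoef Q i i' : E) * A i i'))
            = (qcoef Q i j : E) * (((q⁻¹ : Eˣ) : E) * (A i' j * A i i')) := by
          linear_combination (norm := noncomm_ring)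
            - (((q⁻¹ : Eˣ) : E) * ((qcoef Q i' j : E) * ((hcA i i' i' j).eq * A i i')))
            + (hq' ((qcoef Q i' j : E) * (qcoef Q i i' : E))).eq * (A i' j * A i i')
            + hc34S * (((q⁻¹ : Eˣ) : E) * (A i' j * A i i'))
        have S4 : (q : E) * (((qcoef Q i i' : E) * A i i') * ((qcoef Q i' j : E) * A i' j))
            = (qcoef Q i j : E) * ((q : E) * (A i i' * A i' j)) := by
          linear_combination (norm := noncomm_ring)
            - ((q : E) * ((qcoef Q i i' : E) * ((hcA i' j i i').eq * A i' j)))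
            + (hq ((qcoef Q i i' : E) * (qcoef Q i' j : E))).eq * (A i i' * A i' j)
            + hc43S * ((q : E) * (A i i' * A i' j))
        linear_combination (norm := noncomm_ring)
          - S1 + (qcoef Q i j : E) * hA.2 i i' j i' hii' hjt
          + ((hcA i j i' i').eq * A i j)
          - S3 + S4
      · by_cases hij' : i = j'
        · -- i = j' (so j < i < i')
          rw [← hij'] at hjj' ⊢
          have hji : j < i := hjj'
          rw [opMatrix_apply_ne Q M A hij, opMatrix_apply_ne Q M A hne.symm,
            opMatrix_apply_ne Q M A (ne_of_gt (hji.trans hii')), opMatrix_apply_eq]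
          have hc12L : (qcoef Q i j : E) * (qcoef Q i' i : E) = (qcoef Q i' j : E) := by
            linear_combination (norm := noncomm_ring)
              qswapE i j i' i + (qcoef Q i' j : E) * qdiagE i
          have L3 : ((q⁻¹ : Eˣ) : E) * (((qcoef Q i' j : E) * A i' j) * A i i)
              = (qcoef Q i j : E) * (qcoef Q i' i : E) * (((q⁻¹ : Eˣ) : E) * (A i' j * A i i)) := by
            linear_combination (norm := noncomm_ring)
              (hq' ((qcoef Q i' j : E))).eq * (A i' j * A i i)
              - hc12L * (((q⁻¹ : Eˣ) : E) * (A i' j * A i i))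
          have L4 : (q : E) * (A i i * ((qcoef Q i' j : E) * A i' j))
              = (qcoef Q i j : E) * (qcoef Q i' i : E) * ((q : E) * (A i i * A i' j)) := by
            linear_combination (norm := noncomm_ring)
              - ((q : E) * ((hcA i' j i i).eq * A i' j))
              + (hq ((qcoef Q i' j : E))).eq * (A i i * A i' j)
              - hc12L * ((q : E) * (A i i * A i' j))
          have LM : ((q⁻¹ : Eˣ) : E) * (((qcoef Q i' j : E) * A i' j) * M i)
              = (q : E) * (M i * ((qcoef Q i' j : E) * A i' j)) := by
            linear_combination (norm := noncomm_ring)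
              - (((q⁻¹ : Eˣ) : E) * ((qcoef Q i' j : E) * (hMa i i' j).eq))
              + ((q⁻¹ : Eˣ) : E) * (fact_eps j i i' hji hii') * A i' j
              + hq'q * ((q : E) * (M i * ((qcoef Q i' j : E) * A i' j)))
          linear_combination (norm := noncomm_ring)
            - ((qcoef Q i j : E) * ((hcA i' i i j).eq * A i' i))
            + ((qcoef Q i' i : E) * ((hcA i j i' i).eq * A i j))
            - (hcc i' i i j).eq * (A i' i * A i j)
            + ((qcoef Q i j : E) * (qcoef Q i' i : E)) * hA.2 i i' j i hii' hji
            - L3 + L4 + LM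
        · by_cases hi'j : i' = j
          · -- i' = j (so i < i' < j')
            rw [← hi'j] at hjj' ⊢
            have hi'lt : i' < j' := hjj'
            rw [opMatrix_apply_ne Q M A (ne_of_lt hii'),
              opMatrix_apply_ne Q M A (ne_of_lt hi'lt), opMatrix_apply_eq,
              opMatrix_apply_ne Q M A (ne_of_lt (hii'.trans hi'lt))]
            have hcN : (qcoef Q i i' : E) * (qcoef Q i' j' : E) = (qcoef Q i j' : E) := by
              linear_combination (norm := noncomm_ring)
                qswapE i i' i' j' + qdiagE i' * (qcoef Q i j' : E)
            have N3 : ((q⁻¹ : Eˣ) : E) * (A i' i' * ((qcoef Q i j' : E) * A i j'))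
                = (qcoef Q i i' : E) * (qcoef Q i' j' : E)
                  * (((q⁻¹ : Eˣ) : E) * (A i' i' * A i j')) := by
              linear_combination (norm := noncomm_ring)
                - (((q⁻¹ : Eˣ) : E) * ((hcA i j' i' i').eq * A i j'))
                + (hq' ((qcoef Q i j' : E))).eq * (A i' i' * A i j')
                - hcN * (((q⁻¹ : Eˣ) : E) * (A i' i' * A i j'))
            have N4 : (q : E) * (((qcoef Q i j' : E) * A i j') * A i' i')
                = (qcoef Q i i' : E) * (qcoef Q i' j' : E)
                  * ((q : E) * (A i j' * A i' i')) := by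
              linear_combination (norm := noncomm_ring)
                (hq ((qcoef Q i j' : E))).eq * (A i j' * A i' i')
                - hcN * ((q : E) * (A i j' * A i' i'))
            have NM : ((q⁻¹ : Eˣ) : E) * (M i' * ((qcoef Q i j' : E) * A i j'))
                = (q : E) * (((qcoef Q i j' : E) * A i j') * M i') := by
              linear_combination (norm := noncomm_ring)
                ((q⁻¹ : Eˣ) : E) * (fact_zeta i i' j' hii' hi'lt) * A i j'
                + hq'q * ((q : E) * ((qcoef Q i j' : E) * (M i' * A i j')))
                + (q : E) * ((qcoef Q i j' : E) * (hMa i' i j').eq)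
            linear_combination (norm := noncomm_ring)
              - ((qcoef Q i i' : E) * ((hcA i' j' i i').eq * A i' j'))
              + ((qcoef Q i' j' : E) * ((hcA i i' i' j').eq * A i i'))
              - (hcc i' j' i i').eq * (A i' j' * A i i')
              + ((qcoef Q i i' : E) * (qcoef Q i' j' : E)) * hA.2 i i' i' j' hii' hi'lt
              + NM - N3 + N4
          · -- generic: all four entries off-diagonal
            rw [opMatrix_apply_ne Q M A hij, opMatrix_apply_ne Q M A hi'j',
              opMatrix_apply_ne Q M A hi'j, opMatrix_apply_ne Q M A hij']
            have hc34G : (qcoef Q i' j : E) * (qcoef Q i j' : E)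
                = (qcoef Q i j : E) * (qcoef Q i' j' : E) := qswapE i' j i j'
            have hc43G : (qcoef Q i j' : E) * (qcoef Q i' j : E)
                = (qcoef Q i j : E) * (qcoef Q i' j' : E) := by
              linear_combination (norm := noncomm_ring)
                qswapE i j' i' j + (hcc i' j' i j).eq
            have H3 : ((q⁻¹ : Eˣ) : E) * (((qcoef Q i' j : E) * A i' j) * ((qcoef Q i j' : E) * A i j'))
                = (qcoef Q i j : E) * (qcoef Q i' j' : E)
                  * (((q⁻¹ : Eˣ) : E) * (A i' j * A i j')) := by
              linear_combination (norm := noncomm_ring)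
                - (((q⁻¹ : Eˣ) : E) * ((qcoef Q i' j : E) * ((hcA i j' i' j).eq * A i j')))
                + (hq' ((qcoef Q i' j : E) * (qcoef Q i j' : E))).eq * (A i' j * A i j')
                + hc34G * (((q⁻¹ : Eˣ) : E) * (A i' j * A i j'))
            have H4 : (q : E) * (((qcoef Q i j' : E) * A i j') * ((qcoef Q i' j : E) * A i' j))
                = (qcoef Q i j : E) * (qcoef Q i' j' : E)
                  * ((q : E) * (A i j' * A i' j)) := by
              linear_combination (norm := noncomm_ring)
                - ((q : E) * ((qcoef Q i j' : E) * ((hcA i' j i j').eq * A i' j)))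
                + (hq ((qcoef Q i j' : E) * (qcoef Q i' j : E))).eq * (A i j' * A i' j)
                + hc43G * ((q : E) * (A i j' * A i' j))
            linear_combination (norm := noncomm_ring)
              - ((qcoef Q i j : E) * ((hcA i' j' i j).eq * A i' j'))
              + ((qcoef Q i' j' : E) * ((hcA i j i' j').eq * A i j))
              - (hcc i' j' i j).eq * (A i' j' * A i j)
              + ((qcoef Q i j : E) * (qcoef Q i' j' : E)) * hA.2 i i' j j' hii' hjj'
              - H3 + H4
end
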